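/- arXiv:1412.2421 — 2 statements merged into one kernel-verified Lean document; each statement's English description precedes it below -/
import Mathlib

section
/- Let u, v, w ∈ R^{2l} with ⟨u,v⟩ = 0 and ⟨u,w⟩ = 0, and a, b ∈ R. Then the composition of ESD transformations satisfies T(u,v,a) ∘ T(u,w,b) = T(u, v+w, a+b+⟨v,w⟩). -/
open scoped BigOperators

/-- Index set {-l,…,-1,1,…,l}: `Sum.inl k` represents -(k+1), `Sum.inr k` represents k+1. -/
abbrev Idx (l : ℕ) := Fin l ⊕ Fin l

namespace Idx
/-- negation of an index -/
def neg {l : ℕ} : Idx l → Idx l := Sum.swap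
/-- sign of an index, as a ring element -/
def sgn (R : Type*) [CommRing R] {l : ℕ} : Idx l → R
  | Sum.inl _ => -1
  | Sum.inr _ => 1
end Idx

variable {R : Type*} [CommRing R] {l : ℕ}

/-- the standard symplectic form ⟨u,v⟩ = Σᵢ sgn(i)·uᵢ·v₋ᵢ -/
def sform (u v : Idx l → R) : R := ∑ i : Idx l, Idx.sgn R i * u i * v (Idx.neg i)

/-- standard basis vector e_i -/
def sbv (R : Type*) [CommRing R] {l : ℕ} (i : Idx l) : Idx l → R := Pi.single i 1

/-- Eichler–Siegel–Dickson transformation T(u,v,a) : w ↦ w + u(⟨v,w⟩+a⟨u,w⟩) + v⟨u,w⟩ -/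
def esd (u v : Idx l → R) (a : R) (w : Idx l → R) : Idx l → R :=
  w + (sform v w + a * sform u w) • u + (sform u w) • v

/-- elementary symplectic transvection: T_{ij}(a) = T(e_i, e_{-j}·a·sgn(-j), 0) for j ≠ -i,
and the long root T_{i,-i}(a) = T(e_i, 0, a). -/
def tvGen (i j : Idx l) (a : R) : (Idx l → R) → (Idx l → R) :=
  if j = Idx.neg i then esd (sbv R i) 0 a
  else esd (sbv R i) ((a * Idx.sgn R (Idx.neg j)) • sbv R (Idx.neg j)) 0

lemma sform_add_right (u v w : Idx l → R) : sform u (v + w) = sform u v + sform u w := by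
  simp [sform, mul_add, Finset.sum_add_distrib]

lemma sform_smul_right (c : R) (u v : Idx l → R) : sform u (c • v) = c * sform u v := by
  simp only [sform, Pi.smul_apply, smul_eq_mul, Finset.mul_sum]
  exact Finset.sum_congr rfl fun i _ => by ring

lemma sform_skew (u v : Idx l → R) : sform v u = -sform u v := by
  unfold sform
  rw [← Finset.sum_neg_distrib]
  apply Fintype.sum_equiv (Equiv.sumComm (Fin l) (Fin l))
  intro i
  rcases i with i | i <;> simp [Idx.neg, Idx.sgn] <;> ring

lemma sform_add_left (u v w : Idx l → R) : sform (u + v) w = sform u w + sform v w := by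
  simp [sform, add_mul, mul_add, Finset.sum_add_distrib]

lemma sform_self (u : Idx l → R) : sform u u = 0 := by
  simp [sform, Idx.sgn, Idx.neg, Fintype.sum_sum_type, mul_comm]

/-- T(u,v,a) ∘ T(u,w,b) = T(u, v+w, a+b+⟨v,w⟩). -/
theorem esd_comp (u v w : Idx l → R) (huv : sform u v = 0) (huw : sform u w = 0)
    (a b : R) :
    ∀ x : Idx l → R, esd u v a (esd u w b x) = esd u (v + w) (a + b + sform v w) x := by
  intro x
  have hvu : sform v u = 0 := by rw [sform_skew, huv]; ring
  have hwu : sform w u = 0 := by rw [sform_skew, huw]; ring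
  simp only [esd, sform_add_right, sform_smul_right, sform_self, sform_add_left, hvu, hwu, huv,
    huw]
  ext i
  simp only [Pi.add_apply, Pi.smul_apply, smul_eq_mul]
  ring
end

section
/- Let i be an index with 1 ≤ |i| ≤ l, and let u, v ∈ R^{2l} satisfy u_i = u_{-i} = v_i = v_{-i} = 0 and ⟨u,v⟩ = 0, and let a ∈ R. Then the commutator of ESD transformations satisfies [T(e_i, u, 0), T(e_{-i}, v, a)] = T(u, v·sgn(i), a) ∘ T(e_{-i}, -u·a·sgn(-i), 0), where [x,y] = x y x^{-1} y^{-1}. -/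
open scoped BigOperators

variable {R : Type*} [CommRing R] {l : ℕ}

lemma sform_smul_left (c : R) (u v : Idx l → R) : sform (c • u) v = c * sform u v := by
  simp only [sform, Pi.smul_apply, smul_eq_mul, Finset.mul_sum]
  exact Finset.sum_congr rfl (by intros; ring)

lemma sform_neg_right (u v : Idx l → R) : sform u (-v) = -(sform u v) := by
  simp only [sform, Pi.neg_apply, ← Finset.sum_neg_distrib]
  exact Finset.sum_congr rfl (by intros; ring)

lemma sform_neg_left (u v : Idx l → R) : sform (-u) v = -(sform u v) := by
  simp only [sform, ← Finset.sum_neg_distrib, Pi.neg_apply]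
  exact Finset.sum_congr rfl (by intros; ring)

lemma sform_antisymm (u v : Idx l → R) : sform v u = -(sform u v) := by
  simp only [sform, Fintype.sum_sum_type, Idx.sgn, Idx.neg, Sum.swap_inl, Sum.swap_inr, neg_add,
    ← Finset.sum_neg_distrib]
  rw [add_comm]
  congr 1 <;> exact Finset.sum_congr rfl (by intros; ring)

lemma sform_sbv_left (i : Idx l) (w : Idx l → R) :
    sform (sbv R i) w = Idx.sgn R i * w (Idx.neg i) := by
  simp [sform, sbv, Pi.single_apply]

lemma sform_sbv_right (i : Idx l) (w : Idx l → R) :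
    sform w (sbv R i) = Idx.sgn R (Idx.neg i) * w (Idx.neg i) := by
  have : ∀ j : Idx l, Idx.neg j = i ↔ j = Idx.neg i := by
    intro j; constructor <;> rintro rfl <;> simp [Idx.neg]
  simp [sform, sbv, Pi.single_apply, this]

lemma sbv_apply (i j : Idx l) : sbv R i j = if j = i then 1 else 0 := by
  simp [sbv, Pi.single_apply]

/-- [T(e_i,u,0), T(e_{-i},v,a)] = T(u, v·sgn i, a) ∘ T(e_{-i}, -u·a·sgn(-i), 0),
where [x,y] = x y x⁻¹ y⁻¹ and T(e_i,u,0)⁻¹ = T(e_i,-u,0), T(e_{-i},v,a)⁻¹ = T(e_{-i},-v,-a). -/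
theorem esd_commutator (i : Idx l) (u v : Idx l → R)
    (hui : u i = 0) (huni : u (Idx.neg i) = 0) (hvi : v i = 0) (hvni : v (Idx.neg i) = 0)
    (huv : sform u v = 0) (a : R) :
    ∀ w : Idx l → R,
      esd (sbv R i) u 0 (esd (sbv R (Idx.neg i)) v a
        (esd (sbv R i) (-u) 0 (esd (sbv R (Idx.neg i)) (-v) (-a) w))) =
      esd u (Idx.sgn R i • v) a
        (esd (sbv R (Idx.neg i)) ((-(a * Idx.sgn R (Idx.neg i))) • u) 0 w) := by
  intro w
  have hvu : sform v u = 0 := by rw [sform_antisymm, huv, neg_zero]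
  rcases i with k | k <;>
  · simp only [Idx.neg, Sum.swap_inl, Sum.swap_inr] at huni hvni ⊢
    funext j
    simp only [esd, sform_add_right, sform_smul_right, sform_smul_left, sform_neg_right,
      sform_neg_left, sform_sbv_left, sform_sbv_right, sform_self, Idx.neg, Sum.swap_inl,
      Sum.swap_inr, Idx.sgn, huv, hvu, hui, huni, hvi, hvni, Pi.add_apply, Pi.smul_apply,
      Pi.neg_apply, smul_eq_mul, sbv_apply, if_true, if_false, mul_zero, zero_mul, mul_one,
      one_mul, add_zero, zero_add, mul_neg, neg_mul, neg_neg, neg_zero, reduceCtorEq,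
      Sum.inl.injEq, Sum.inr.injEq]
    ring
end
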